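/- (Classical capacity of a bipartite unitary is at least its Schmidt strength) Let U be a unitary on ℂ^d ⊗ ℂ^d, {σ_i}_{i=1}^{d²} unitaries on ℂ^d with (1/d)Tr[σ_i†σ_j] = δ_{ij}, and define |Ψ_i⟩ = (U^{AB} ⊗ I)(σ_i^A ⊗ I)(|Φ_d⟩^{AB₂} ⊗ |Φ_d⟩^{BB₁}). Then each reduced state Ψ_i^{BB₁B₂} has von Neumann entropy log d, the average state Ψ̄ = (1/d²)Σ_i Ψ_i^{BB₁B₂} has entropy log d + K(U), and hence the Holevo quantity of the ensemble {1/d², Ψ_i^{BB₁B₂}} equals K(U). -/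

import Mathlib

open scoped BigOperators Kronecker ComplexOrder
open Matrix Complex MeasureTheory

noncomputable section

/-- The maximally entangled state `|Φ_d⟩ = (1/√d) Σ_t |t⟩⊗|t⟩` as a vector on `Fin d × Fin d`. -/
def Phi (d : ℕ) : Fin d × Fin d → ℂ := fun p => if p.1 = p.2 then ((1 / Real.sqrt d : ℝ) : ℂ) else 0

/-- Action of `E ⊗ I` on a bipartite vector. -/
def actL {d : ℕ} (E : Matrix (Fin d) (Fin d) ℂ) (v : Fin d × Fin d → ℂ) : Fin d × Fin d → ℂ :=
  fun p => ∑ a', E p.1 a' * v (a', p.2)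

/-- Action of `I ⊗ F` on a bipartite vector. -/
def actR {d : ℕ} (F : Matrix (Fin d) (Fin d) ℂ) (v : Fin d × Fin d → ℂ) : Fin d × Fin d → ℂ :=
  fun p => ∑ b', F p.2 b' * v (p.1, b')

/-- Outer product `|v⟩⟨v|`. -/
def outer {ι : Type*} [Fintype ι] (v : ι → ℂ) : Matrix ι ι ℂ := Matrix.of fun i j => v i * star (v j)

open Classical in
/-- Positive-semidefinite square root, extended by `0` off the PSD cone. -/
def psqrt {n : Type*} [Fintype n] [DecidableEq n] (A : Matrix n n ℂ) : Matrix n n ℂ :=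
  if h : A.PosSemidef then
    (h.1.eigenvectorUnitary : Matrix n n ℂ) * diagonal ((↑) ∘ Real.sqrt ∘ h.1.eigenvalues) *
      (star h.1.eigenvectorUnitary : Matrix n n ℂ) else 0

/-- Trace norm `‖A‖₁ = Tr √(AᴴA)`. -/
def traceNorm {n : Type*} [Fintype n] [DecidableEq n] (A : Matrix n n ℂ) : ℝ :=
  (psqrt (Aᴴ * A)).trace.re

/-- Uhlmann fidelity `F(ρ,σ) = (Tr √(√ρ σ √ρ))²`. -/
def fid {n : Type*} [Fintype n] [DecidableEq n] (ρ σ : Matrix n n ℂ) : ℝ :=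
  ((psqrt (psqrt ρ * σ * psqrt ρ)).trace.re) ^ 2

/-- Von Neumann entropy of a Hermitian matrix, `S(ρ) = -Σ λᵢ log λᵢ`. -/
def vN {n : Type*} [Fintype n] [DecidableEq n] {ρ : Matrix n n ℂ} (h : ρ.IsHermitian) : ℝ :=
  -∑ i, h.eigenvalues i * Real.log (h.eigenvalues i)

/-- Cyclic shift `X|t⟩ = |t-1⟩`, i.e. `X = Σ_t |t⟩⟨t+1|`. -/
def Xop (d : ℕ) [NeZero d] : Matrix (Fin d) (Fin d) ℂ :=
  Matrix.of fun t t' => if t' = t + 1 then 1 else 0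

/-- Clock operator `Z = Σ_t e^{2πit/d}|t⟩⟨t|`. -/
def Zop (d : ℕ) [NeZero d] : Matrix (Fin d) (Fin d) ℂ :=
  Matrix.of fun t t' => if t = t' then Complex.exp (2 * Real.pi * Complex.I * ((t : ℕ) : ℂ) / d) else 0

/-- Generalized Pauli operator `σ_{pq} = X^p Z^q`. -/
def pauli (d : ℕ) [NeZero d] (p q : Fin d) : Matrix (Fin d) (Fin d) ℂ :=
  Xop d ^ (p : ℕ) * Zop d ^ (q : ℕ)

/-- `|Ψ(U)⟩ = (U^{AB} ⊗ I^{R_A R_B})(|Φ_d⟩^{AR_A} ⊗ |Φ_d⟩^{BR_B})`, indexed `((a,r_A),(b,r_B))`. -/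
def PsiVec {d : ℕ} (U : Matrix (Fin d × Fin d) (Fin d × Fin d) ℂ) :
    (Fin d × Fin d) × (Fin d × Fin d) → ℂ :=
  fun x => ∑ a', ∑ b', U (x.1.1, x.2.1) (a', b') * Phi d (a', x.1.2) * Phi d (b', x.2.2)

/-- Reduced density matrix on the first factor of a bipartite pure state. -/
def redFst {ι κ : Type*} [Fintype ι] [Fintype κ] (v : ι × κ → ℂ) : Matrix ι ι ℂ :=
  Matrix.of fun x x' => ∑ y, v (x, y) * star (v (x', y))

/-- Reduced density matrix on the second factor of a bipartite pure state. -/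
def redSnd {ι κ : Type*} [Fintype ι] [Fintype κ] (v : ι × κ → ℂ) : Matrix κ κ ℂ :=
  Matrix.of fun y y' => ∑ x, v (x, y) * star (v (x, y'))

/-- `|Ψ_i⟩ = (U^{AB} ⊗ I)(σ^A ⊗ I)(|Φ_d⟩^{AB₂} ⊗ |Φ_d⟩^{BB₁})`,
indexed `(a, ((b, b₁), b₂))`. -/
def PsiMsg {d : ℕ} (U : Matrix (Fin d × Fin d) (Fin d × Fin d) ℂ)
    (σ : Matrix (Fin d) (Fin d) ℂ) : Fin d × ((Fin d × Fin d) × Fin d) → ℂ :=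
  fun x => ∑ a'', ∑ b', U (x.1, x.2.1.1) (a'', b') *
    (∑ a3, σ a'' a3 * Phi d (a3, x.2.2)) * Phi d (b', x.2.1.2)

/-!
Both reduced states have the form `B * Bᴴ` with `Bᴴ * B` diagonal; since `B * Bᴴ` and `Bᴴ * B`
have the same nonzero spectrum, their entropies can be read off the diagonal of `Bᴴ * B`.

For a single message, `Ψ_i(a, (b, b₁, b₂)) = W (a, b) (b₂, b₁) / d` with `W = U (σ_i ⊗ I)`
unitary, so `Bᴴ * B` is the (transposed) reduced state on `A`, which is `I / d`: entropy `log d`.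

For the average, the operator-Schmidt decomposition gives `W = Σ_s c_s (E_s σ_i) ⊗ F_s`, and
summing over the orthogonal unitary basis `σ_i` twirls the `A`-system into the completely
depolarising channel. The average is therefore `(G Gᴴ ⊗ I) / d²`, where `G` has the columns
`c_s F_s`; orthogonality of the `F_s` makes `Bᴴ * B` diagonal with entry `c_s² / d` repeated `d`
times, whence `log d + K(U)`. The normalisation `Σ_s c_s² = 1` is read off the trace of the
average state.
-/

section Spectrum

variable {n m : Type*} [Fintype n] [DecidableEq n] [Fintype m] [DecidableEq m]

open Polynomial in
theorem Matrix.IsHermitian.sum_apply_eigenvalues_eq_of_eq_mul_conjTranspose {A : Matrix n n ℂ}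
    (hA : A.IsHermitian) {B : Matrix n m ℂ} {μ : m → ℝ} (hAB : A = B * Bᴴ)
    (hBB : Bᴴ * B = diagonal fun j => (μ j : ℂ)) {f : ℝ → ℝ} (hf : f 0 = 0) :
    ∑ i, f (hA.eigenvalues i) = ∑ j, f (μ j) := by
  have hdiag : (∏ j, (X - C (μ j : ℂ))) ≠ 0 :=
    (monic_prod_of_monic _ _ fun j _ => monic_X_sub_C _).ne_zero
  have hroots := congrArg roots (charpoly_mul_comm' B Bᴴ)
  rw [← hAB, hBB, charpoly_diagonal, roots_mul ((monic_X_pow _).mul (charpoly_monic _)).ne_zero,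
    roots_mul (mul_ne_zero (pow_ne_zero _ X_ne_zero) hdiag), hA.roots_charpoly_eq_eigenvalues,
    roots_prod _ _ hdiag] at hroots
  simpa [roots_X_pow, Multiset.map_nsmul, Multiset.sum_nsmul, hf, Function.comp_def]
    using congrArg (fun s : Multiset ℂ => (s.map (f ∘ re)).sum) hroots

theorem Matrix.IsHermitian.vN_eq_of_eq_mul_conjTranspose {A : Matrix n n ℂ}
    (hA : A.IsHermitian) {B : Matrix n m ℂ} {μ : m → ℝ} (hAB : A = B * Bᴴ)
    (hBB : Bᴴ * B = diagonal fun j => (μ j : ℂ)) :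
    vN hA = ∑ j, Real.negMulLog (μ j) := by
  rw [vN, ← Finset.sum_neg_distrib,
    ← hA.sum_apply_eigenvalues_eq_of_eq_mul_conjTranspose hAB hBB (f := Real.negMulLog) (by simp)]
  simp [Real.negMulLog]

end Spectrum

theorem sum_negMulLog_div_of_sum_eq_one {κ : Type*} [Fintype κ] {p : κ → ℝ} (hp : ∑ s, p s = 1)
    {d : ℕ} (hd : d ≠ 0) :
    ∑ x : κ × Fin d, Real.negMulLog (p x.1 / d) = Real.log d + ∑ s, Real.negMulLog (p s) := by
  have hd' : (d : ℝ) ≠ 0 := Nat.cast_ne_zero.mpr hd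
  have hlog : (d : ℝ) * Real.negMulLog (d : ℝ)⁻¹ = Real.log d := by
    rw [Real.negMulLog, Real.log_inv]
    field_simp
  simp only [Fintype.sum_prod_type, Finset.sum_const, Finset.card_univ, Fintype.card_fin,
    nsmul_eq_mul, div_eq_mul_inv, Real.negMulLog_mul, Finset.sum_add_distrib,
    mul_inv_cancel_left₀ hd']
  rw [← Finset.mul_sum, ← Finset.sum_mul, hp, one_mul, hlog, add_comm]

theorem redSnd_eq_mul_conjTranspose {ι κ : Type*} [Fintype ι] [Fintype κ] (v : ι × κ → ℂ) :
    redSnd v = of (fun y x => v (x, y)) * (of fun y x => v (x, y))ᴴ := by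
  ext y y'
  simp [redSnd, mul_apply]

theorem conjTranspose_mul_self_eq_transpose_redFst {ι κ : Type*} [Fintype ι] [Fintype κ]
    (v : ι × κ → ℂ) : (of fun y x => v (x, y))ᴴ * of (fun y x => v (x, y)) = (redFst v)ᵀ := by
  ext x x'
  simp [redFst, mul_apply, mul_comm]

section Message

variable {d : ℕ}

theorem PsiMsg_apply (U : Matrix (Fin d × Fin d) (Fin d × Fin d) ℂ) (τ : Matrix (Fin d) (Fin d) ℂ)
    (a : Fin d) (y : (Fin d × Fin d) × Fin d) :
    PsiMsg U τ (a, y) =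
      (d : ℂ)⁻¹ * (U * (τ ⊗ₖ (1 : Matrix (Fin d) (Fin d) ℂ))) (a, y.1.1) (y.2, y.1.2) := by
  have hPhi : ((1 / Real.sqrt d : ℝ) : ℂ) * ((1 / Real.sqrt d : ℝ) : ℂ) = (d : ℂ)⁻¹ := by
    rw [← Complex.ofReal_mul, div_mul_div_comm, one_mul, Real.mul_self_sqrt (Nat.cast_nonneg d)]
    simp
  simp only [PsiMsg, Phi, mul_apply, Fintype.sum_prod_type, kroneckerMap_apply, one_apply,
    mul_ite, mul_zero, mul_one, Finset.sum_ite_eq', Finset.mem_univ, if_true, Finset.mul_sum,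
    ← hPhi]
  exact Finset.sum_congr rfl fun _ _ => by ring

theorem redFst_PsiMsg (hd : d ≠ 0) {U : Matrix (Fin d × Fin d) (Fin d × Fin d) ℂ}
    (hU : U ∈ unitaryGroup (Fin d × Fin d) ℂ) {τ : Matrix (Fin d) (Fin d) ℂ}
    (hτ : τ ∈ unitaryGroup (Fin d) ℂ) : redFst (PsiMsg U τ) = (d : ℂ)⁻¹ • 1 := by
  have hW := mem_unitaryGroup_iff.mp (mul_mem hU (kronecker_mem_unitary hτ (one_mem _)))
  ext a a'
  simp only [redFst, of_apply, Fintype.sum_prod_type, PsiMsg_apply]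
  generalize U * (τ ⊗ₖ (1 : Matrix (Fin d) (Fin d) ℂ)) = W at hW ⊢
  calc ∑ b, ∑ b₁, ∑ b₂, (d : ℂ)⁻¹ * W (a, b) (b₂, b₁) * star ((d : ℂ)⁻¹ * W (a', b) (b₂, b₁))
      = (d : ℂ)⁻¹ ^ 2 * ∑ b, (W * star W) (a, b) (a', b) := by
        simp only [mul_apply, star_apply, Fintype.sum_prod_type, star_mul', Finset.mul_sum]
        refine Finset.sum_congr rfl fun b _ => ?_
        rw [Finset.sum_comm]
        simp only [star_inv₀, star_natCast]
        exact Finset.sum_congr rfl fun _ _ => Finset.sum_congr rfl fun _ _ => by ring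
    _ = ((d : ℂ)⁻¹ • (1 : Matrix (Fin d) (Fin d) ℂ)) a a' := by
        rw [hW]
        by_cases h : a = a' <;> simp [h, one_apply]
        field_simp

theorem trace_redSnd_PsiMsg (hd : d ≠ 0) {U : Matrix (Fin d × Fin d) (Fin d × Fin d) ℂ}
    (hU : U ∈ unitaryGroup (Fin d × Fin d) ℂ) {τ : Matrix (Fin d) (Fin d) ℂ}
    (hτ : τ ∈ unitaryGroup (Fin d) ℂ) : (redSnd (PsiMsg U τ)).trace = 1 := by
  rw [redSnd_eq_mul_conjTranspose, trace_mul_comm, conjTranspose_mul_self_eq_transpose_redFst,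
    trace_transpose, redFst_PsiMsg hd hU hτ, trace_smul, trace_one, Fintype.card_fin, smul_eq_mul,
    inv_mul_cancel₀ (Nat.cast_ne_zero.mpr hd)]

theorem vN_redSnd_PsiMsg (hd : d ≠ 0) {U : Matrix (Fin d × Fin d) (Fin d × Fin d) ℂ}
    (hU : U ∈ unitaryGroup (Fin d × Fin d) ℂ) {τ : Matrix (Fin d) (Fin d) ℂ}
    (hτ : τ ∈ unitaryGroup (Fin d) ℂ) (h : (redSnd (PsiMsg U τ)).IsHermitian) :
    vN h = Real.log d := by
  have hBB : (of fun y x => PsiMsg U τ (x, y))ᴴ * of (fun y x => PsiMsg U τ (x, y)) =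
      diagonal fun _ => ((d⁻¹ : ℝ) : ℂ) := by
    rw [conjTranspose_mul_self_eq_transpose_redFst, redFst_PsiMsg hd hU hτ, transpose_smul,
      transpose_one, smul_one_eq_diagonal]
    simp
  rw [h.vN_eq_of_eq_mul_conjTranspose (redSnd_eq_mul_conjTranspose _) hBB]
  simp [Real.negMulLog, hd]

end Message

section Twirl

variable {ι n : Type*} [Fintype ι] [DecidableEq ι] [Fintype n] [DecidableEq n]

theorem sum_apply_mul_star_apply_of_orthogonal
    (hcard : Fintype.card ι = Fintype.card n * Fintype.card n) {σ : ι → Matrix n n ℂ}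
    (hσ : ∀ i j, ((σ i)ᴴ * σ j).trace = if i = j then (Fintype.card n : ℂ) else 0)
    (p q r s : n) :
    ∑ i, σ i p q * star (σ i r s) = if p = r ∧ q = s then (Fintype.card n : ℂ) else 0 := by
  have : Nonempty n := ⟨p⟩
  have hn : (Fintype.card n : ℂ) ≠ 0 := Nat.cast_ne_zero.mpr Fintype.card_ne_zero
  let V : Matrix (n × n) ι ℂ := of fun x i => σ i x.1 x.2
  have hVV : Vᴴ * V = (Fintype.card n : ℂ) • 1 := by
    ext i j
    rw [Matrix.smul_apply, one_apply, smul_eq_mul, mul_ite, mul_one, mul_zero, ← hσ i j]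
    simp only [trace, diag_apply, mul_apply, conjTranspose_apply, Fintype.sum_prod_type, V,
      of_apply]
    exact Finset.sum_comm
  have hVV' : V * ((Fintype.card n : ℂ)⁻¹ • Vᴴ) = 1 := by
    refine (mul_eq_one_comm_of_equiv (Fintype.equivOfCardEq (by simp [hcard]))).mp ?_
    rw [smul_mul, hVV, smul_smul, inv_mul_cancel₀ hn, one_smul]
  rw [Matrix.mul_smul] at hVV'
  have := congrFun (congrFun hVV' (p, q)) (r, s)
  simp only [Matrix.smul_apply, mul_apply, conjTranspose_apply, V, of_apply,
    one_apply, Prod.mk.injEq, smul_eq_mul] at this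
  rw [inv_mul_eq_iff_eq_mul₀ hn] at this
  rw [this]
  split_ifs <;> simp

theorem sum_conjTranspose_mul_mul_of_orthogonal
    (hcard : Fintype.card ι = Fintype.card n * Fintype.card n) {σ : ι → Matrix n n ℂ}
    (hσ : ∀ i j, ((σ i)ᴴ * σ j).trace = if i = j then (Fintype.card n : ℂ) else 0)
    (N : Matrix n n ℂ) :
    ∑ i, (σ i)ᴴ * N * σ i = ((Fintype.card n : ℂ) * N.trace) • 1 := by
  ext x y
  calc (∑ i, (σ i)ᴴ * N * σ i) x y
      = ∑ q, ∑ p, N p q * ∑ i, σ i q y * star (σ i p x) := by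
        simp only [Matrix.sum_apply, mul_apply, conjTranspose_apply, Finset.sum_mul, Finset.mul_sum]
        rw [Finset.sum_comm]
        refine Finset.sum_congr rfl fun q _ => ?_
        rw [Finset.sum_comm]
        exact Finset.sum_congr rfl fun p _ => Finset.sum_congr rfl fun i _ => by ring
    _ = (((Fintype.card n : ℂ) * N.trace) • (1 : Matrix n n ℂ)) x y := by
        simp only [sum_apply_mul_star_apply_of_orthogonal hcard hσ, Matrix.smul_apply, one_apply,
          trace, diag_apply]
        by_cases h : x = y
        · subst h
          simp [Finset.mul_sum, mul_comm]
        · simp [h, Ne.symm h]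

end Twirl

theorem sum_smul_kronecker_mul_kronecker_one {ι l m n R : Type*} [Fintype m] [Fintype n]
    [DecidableEq n] [CommSemiring R] (c : ι → R) (E : ι → Matrix l m R) (F : ι → Matrix n n R)
    (s : Finset ι) (τ : Matrix m m R) :
    (∑ i ∈ s, c i • (E i ⊗ₖ F i)) * (τ ⊗ₖ (1 : Matrix n n R)) =
      ∑ i ∈ s, c i • ((E i * τ) ⊗ₖ F i) := by
  simp only [Matrix.sum_mul, Matrix.smul_mul, ← mul_kronecker_mul, mul_one]

theorem sum_mul_star_sum {ι κ : Type*} [Fintype ι] [Fintype κ] (f g : κ → ℂ) (X Y : κ → ι → ℂ) :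
    ∑ a, (∑ s, f s * X s a) * star (∑ t, g t * Y t a) =
      ∑ s, ∑ t, f s * star (g t) * ∑ a, X s a * star (Y t a) := by
  simp_rw [star_sum, Finset.sum_mul_sum, Finset.mul_sum]
  rw [Finset.sum_comm]
  refine Finset.sum_congr rfl fun s _ => ?_
  rw [Finset.sum_comm]
  exact Finset.sum_congr rfl fun t _ => Finset.sum_congr rfl fun a _ => by rw [star_mul']; ring

def weightedColumns {κ m n : Type*} (c : κ → ℝ) (F : κ → Matrix m n ℂ) : Matrix (m × n) κ ℂ :=
  of fun x s => c s * F s x.1 x.2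

theorem conjTranspose_weightedColumns_mul_self {κ m n : Type*} [Fintype m] [Fintype n]
    [DecidableEq κ] {c : κ → ℝ} {F : κ → Matrix m n ℂ} {r : ℂ}
    (hF : ∀ s t, ((F s)ᴴ * F t).trace = if s = t then r else 0) :
    (weightedColumns c F)ᴴ * weightedColumns c F = diagonal fun s => r * (c s : ℂ) ^ 2 := by
  ext s t
  have := hF s t
  simp only [trace, diag_apply, mul_apply, conjTranspose_apply] at this
  simp only [mul_apply, conjTranspose_apply, weightedColumns, of_apply, Fintype.sum_prod_type,
    star_mul', Complex.star_def, Complex.conj_ofReal, diagonal_apply]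
  rw [Finset.sum_comm]
  calc ∑ j, ∑ i, (c s : ℂ) * (starRingEnd ℂ) (F s i j) * (c t * F t i j)
      = c s * c t * ∑ j, ∑ i, star (F s i j) * F t i j := by
        simp only [Finset.mul_sum]
        exact Finset.sum_congr rfl fun _ _ => Finset.sum_congr rfl fun _ _ => by
          rw [Complex.star_def]; ring
    _ = if s = t then r * (c s : ℂ) ^ 2 else 0 := by
        rw [this]
        split_ifs with h
        · rw [h]; ring
        · simp

section Decomp

variable {d S : ℕ} {U : Matrix (Fin d × Fin d) (Fin d × Fin d) ℂ} {c : Fin S → ℝ}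
  {E F : Fin S → Matrix (Fin d) (Fin d) ℂ}

theorem PsiMsg_apply_of_eq_sum (hdecomp : U = ∑ s, (c s : ℂ) • (E s ⊗ₖ F s))
    (τ : Matrix (Fin d) (Fin d) ℂ) (a : Fin d) (x : Fin d × Fin d) (k : Fin d) :
    PsiMsg U τ (a, (x, k)) = (d : ℂ)⁻¹ * ∑ s, (c s * F s x.1 x.2) * (E s * τ) a k := by
  rw [PsiMsg_apply, hdecomp, sum_smul_kronecker_mul_kronecker_one, Matrix.sum_apply]
  simp only [Matrix.smul_apply, kroneckerMap_apply, smul_eq_mul]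
  exact congrArg _ (Finset.sum_congr rfl fun s _ => by ring)

theorem redSnd_PsiMsg_apply (hdecomp : U = ∑ s, (c s : ℂ) • (E s ⊗ₖ F s))
    (τ : Matrix (Fin d) (Fin d) ℂ) (x x' : Fin d × Fin d) (k k' : Fin d) :
    redSnd (PsiMsg U τ) (x, k) (x', k') = (d : ℂ)⁻¹ ^ 2 * ∑ s, ∑ t,
      (c s * F s x.1 x.2) * star (c t * F t x'.1 x'.2) * (τᴴ * ((E t)ᴴ * E s) * τ) k' k := by
  have hconj : ∀ s t, τᴴ * ((E t)ᴴ * E s) * τ = (E t * τ)ᴴ * (E s * τ) := fun s t => by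
    simp only [conjTranspose_mul, Matrix.mul_assoc]
  simp only [redSnd, of_apply, PsiMsg_apply_of_eq_sum hdecomp, hconj]
  calc ∑ a, (d : ℂ)⁻¹ * (∑ s, (c s * F s x.1 x.2) * (E s * τ) a k) *
        star ((d : ℂ)⁻¹ * ∑ t, (c t * F t x'.1 x'.2) * (E t * τ) a k')
      = (d : ℂ)⁻¹ ^ 2 * ∑ a, (∑ s, (c s * F s x.1 x.2) * (E s * τ) a k) *
          star (∑ t, (c t * F t x'.1 x'.2) * (E t * τ) a k') := by
        rw [Finset.mul_sum]
        exact Finset.sum_congr rfl fun a _ => by rw [star_mul', star_inv₀, star_natCast]; ring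
    _ = _ := by
        rw [sum_mul_star_sum]
        simp only [mul_apply, conjTranspose_apply, mul_comm (star _)]

theorem sum_redSnd_PsiMsg {ι : Type*} [Fintype ι] [DecidableEq ι] (hd : d ≠ 0)
    (hdecomp : U = ∑ s, (c s : ℂ) • (E s ⊗ₖ F s))
    (hE : ∀ s t, ((E s)ᴴ * E t).trace = if s = t then (d : ℂ) else 0)
    (hcard : Fintype.card ι = d * d) {σ : ι → Matrix (Fin d) (Fin d) ℂ}
    (hσ : ∀ i j, ((σ i)ᴴ * σ j).trace = if i = j then (d : ℂ) else 0) :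
    ∑ i, redSnd (PsiMsg U (σ i)) =
      (weightedColumns c F * (weightedColumns c F)ᴴ) ⊗ₖ (1 : Matrix (Fin d) (Fin d) ℂ) := by
  have htwirl := sum_conjTranspose_mul_mul_of_orthogonal (n := Fin d) (by simpa using hcard)
    (by simpa using hσ)
  ext ⟨x, k⟩ ⟨x', k'⟩
  calc (∑ i, redSnd (PsiMsg U (σ i))) (x, k) (x', k')
      = (d : ℂ)⁻¹ ^ 2 * ∑ s, ∑ t, (c s * F s x.1 x.2) * star (c t * F t x'.1 x'.2) *
          (∑ i, (σ i)ᴴ * ((E t)ᴴ * E s) * σ i) k' k := by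
        simp only [Matrix.sum_apply, redSnd_PsiMsg_apply hdecomp, ← Finset.mul_sum]
        rw [Finset.sum_comm]
        refine congrArg _ (Finset.sum_congr rfl fun s _ => ?_)
        rw [Finset.sum_comm]
        simp only [Finset.mul_sum]
    _ = _ := by
        simp only [htwirl, hE, Matrix.smul_apply, one_apply, kroneckerMap_apply, mul_apply,
          conjTranspose_apply, weightedColumns, of_apply, Fintype.card_fin, smul_eq_mul, mul_ite,
          mul_zero, mul_one, Finset.mul_sum]
        rcases eq_or_ne k k' with rfl | hk
        · simp only [if_true, Finset.sum_ite_eq', Finset.mem_univ]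
          exact Finset.sum_congr rfl fun s _ => by field_simp
        · simp [hk, hk.symm]

theorem vN_average_redSnd_PsiMsg {ι : Type*} [Fintype ι] [DecidableEq ι] (hd : d ≠ 0)
    (hU : U ∈ unitaryGroup (Fin d × Fin d) ℂ) (hdecomp : U = ∑ s, (c s : ℂ) • (E s ⊗ₖ F s))
    (hE : ∀ s t, ((E s)ᴴ * E t).trace = if s = t then (d : ℂ) else 0)
    (hF : ∀ s t, ((F s)ᴴ * F t).trace = if s = t then (d : ℂ) else 0)
    (hcard : Fintype.card ι = d * d) {σ : ι → Matrix (Fin d) (Fin d) ℂ}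
    (hσu : ∀ i, σ i ∈ unitaryGroup (Fin d) ℂ)
    (hσ : ∀ i j, ((σ i)ᴴ * σ j).trace = if i = j then (d : ℂ) else 0)
    (h : (((1 : ℂ) / (d ^ 2 : ℂ)) • ∑ i, redSnd (PsiMsg U (σ i))).IsHermitian) :
    vN h = Real.log d + (-∑ s, c s ^ 2 * Real.log (c s ^ 2)) := by
  have hd' : (d : ℂ) ≠ 0 := Nat.cast_ne_zero.mpr hd
  set B := (d : ℂ)⁻¹ • (weightedColumns c F ⊗ₖ (1 : Matrix (Fin d) (Fin d) ℂ))
  have hAB : ((1 : ℂ) / (d ^ 2 : ℂ)) • ∑ i, redSnd (PsiMsg U (σ i)) = B * Bᴴ := by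
    simp only [B, sum_redSnd_PsiMsg hd hdecomp hE hcard hσ, conjTranspose_smul,
      conjTranspose_kronecker, conjTranspose_one, Matrix.smul_mul, Matrix.mul_smul,
      ← mul_kronecker_mul, mul_one, smul_smul, star_inv₀, star_natCast]
    congr 1
    ring
  have hBB : Bᴴ * B = diagonal fun p : Fin S × Fin d => ((c p.1 ^ 2 / d : ℝ) : ℂ) := by
    simp only [B, conjTranspose_smul, conjTranspose_kronecker, conjTranspose_one,
      Matrix.smul_mul, Matrix.mul_smul, ← mul_kronecker_mul, mul_one, smul_smul, star_inv₀,
      star_natCast, conjTranspose_weightedColumns_mul_self hF]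
    rw [← diagonal_one, diagonal_kronecker_diagonal, ← diagonal_smul]
    congr 1
    ext p
    simp only [Pi.smul_apply, smul_eq_mul, mul_one]
    push_cast
    field_simp
  have hsum : ∑ s, c s ^ 2 = 1 := by
    have htr : (B * Bᴴ).trace = 1 := by
      rw [← hAB, trace_smul, trace_sum,
        Finset.sum_congr rfl fun i _ => trace_redSnd_PsiMsg hd hU (hσu i)]
      simp [hcard]
      field_simp
    rw [trace_mul_comm, hBB, trace_diagonal, Fintype.sum_prod_type] at htr
    simp only [Finset.sum_const, Finset.card_univ, Fintype.card_fin, nsmul_eq_mul] at htr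
    push_cast at htr
    simp only [mul_div_cancel₀ _ hd'] at htr
    exact_mod_cast htr
  rw [h.vN_eq_of_eq_mul_conjTranspose hAB hBB, sum_negMulLog_div_of_sum_eq_one hsum hd]
  simp [Real.negMulLog, Finset.sum_neg_distrib]

end Decomp

theorem trace_conjTranspose_mul_of_normalized {ι m : Type*} [DecidableEq ι] [Fintype m] {d : ℕ}
    (hd : d ≠ 0) {G : ι → Matrix m (Fin d) ℂ}
    (hG : ∀ s t, (1 / d : ℂ) * ((G s)ᴴ * G t).trace = if s = t then 1 else 0) (s t : ι) :
    ((G s)ᴴ * G t).trace = if s = t then (d : ℂ) else 0 := by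
  rw [← mul_one (d : ℂ), ← mul_ite_zero, ← hG s t, ← mul_assoc, mul_one_div_cancel
    (Nat.cast_ne_zero.mpr hd), one_mul]

theorem holevo_equals_schmidt_strength_general (d S : ℕ) (hd : 0 < d)
    (U : Matrix (Fin d × Fin d) (Fin d × Fin d) ℂ)
    (hU : U ∈ Matrix.unitaryGroup (Fin d × Fin d) ℂ)
    (c : Fin S → ℝ) (E F : Fin S → Matrix (Fin d) (Fin d) ℂ)
    (hdecomp : U = ∑ s, (c s : ℂ) • (E s ⊗ₖ F s))
    (hE : ∀ s s', (1 / d : ℂ) * ((E s)ᴴ * E s').trace = if s = s' then 1 else 0)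
    (hF : ∀ s s', (1 / d : ℂ) * ((F s)ᴴ * F s').trace = if s = s' then 1 else 0)
    (σ : Fin (d * d) → Matrix (Fin d) (Fin d) ℂ)
    (hσu : ∀ i, σ i ∈ Matrix.unitaryGroup (Fin d) ℂ)
    (hσ : ∀ i j, (1 / d : ℂ) * ((σ i)ᴴ * σ j).trace = if i = j then 1 else 0) :
    (∀ i (h : (redSnd (PsiMsg U (σ i))).IsHermitian), vN h = Real.log d) ∧
    (∀ h : (((1 : ℂ) / (d ^ 2 : ℂ)) • ∑ i, redSnd (PsiMsg U (σ i))).IsHermitian,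
      vN h = Real.log d + (-∑ s, c s ^ 2 * Real.log (c s ^ 2))) ∧
    (∀ (h : (((1 : ℂ) / (d ^ 2 : ℂ)) • ∑ i, redSnd (PsiMsg U (σ i))).IsHermitian)
      (hi : ∀ i, (redSnd (PsiMsg U (σ i))).IsHermitian),
      vN h - ((1 : ℝ) / (d ^ 2 : ℝ)) * ∑ i, vN (hi i)
        = -∑ s, c s ^ 2 * Real.log (c s ^ 2)) := by
  have hd : d ≠ 0 := hd.ne'
  have hmsg := fun i => vN_redSnd_PsiMsg hd hU (hσu i)
  have havg := fun h => vN_average_redSnd_PsiMsg hd hU hdecomp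
    (trace_conjTranspose_mul_of_normalized hd hE) (trace_conjTranspose_mul_of_normalized hd hF)
    (Fintype.card_fin _) hσu (trace_conjTranspose_mul_of_normalized hd hσ) h
  refine ⟨hmsg, havg, fun h hi => ?_⟩
  rw [havg h, Finset.sum_congr rfl fun i _ => hmsg i (hi i), Finset.sum_const, Finset.card_univ,
    Fintype.card_fin, nsmul_eq_mul]
  field_simp
  push_cast
  ring

/-- each `Ψ_i^{BB₁B₂}` has entropy `log d`, the average state has entropy
`log d + K(U)`, hence the Holevo quantity of `{1/d², Ψ_i^{BB₁B₂}}` equals `K(U)`. -/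
theorem holevo_equals_schmidt_strength (d S : ℕ) (hd : 0 < d)
    (U : Matrix (Fin d × Fin d) (Fin d × Fin d) ℂ)
    (hU : U ∈ Matrix.unitaryGroup (Fin d × Fin d) ℂ)
    (c : Fin S → ℝ) (E F : Fin S → Matrix (Fin d) (Fin d) ℂ)
    (hc : ∀ s, 0 < c s)
    (hdecomp : U = ∑ s, (c s : ℂ) • (E s ⊗ₖ F s))
    (hE : ∀ s s', (1 / d : ℂ) * ((E s)ᴴ * E s').trace = if s = s' then 1 else 0)
    (hF : ∀ s s', (1 / d : ℂ) * ((F s)ᴴ * F s').trace = if s = s' then 1 else 0)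
    (σ : Fin (d * d) → Matrix (Fin d) (Fin d) ℂ)
    (hσu : ∀ i, σ i ∈ Matrix.unitaryGroup (Fin d) ℂ)
    (hσ : ∀ i j, (1 / d : ℂ) * ((σ i)ᴴ * σ j).trace = if i = j then 1 else 0) :
    (∀ i (h : (redSnd (PsiMsg U (σ i))).IsHermitian), vN h = Real.log d) ∧
    (∀ h : (((1 : ℂ) / (d ^ 2 : ℂ)) • ∑ i, redSnd (PsiMsg U (σ i))).IsHermitian,
      vN h = Real.log d + (-∑ s, c s ^ 2 * Real.log (c s ^ 2))) ∧
    (∀ (h : (((1 : ℂ) / (d ^ 2 : ℂ)) • ∑ i, redSnd (PsiMsg U (σ i))).IsHermitian)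
      (hi : ∀ i, (redSnd (PsiMsg U (σ i))).IsHermitian),
      vN h - ((1 : ℝ) / (d ^ 2 : ℝ)) * ∑ i, vN (hi i)
        = -∑ s, c s ^ 2 * Real.log (c s ^ 2)) :=
  holevo_equals_schmidt_strength_general d S hd U hU c E F hdecomp hE hF σ hσu hσ
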